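/- arXiv:1701.00190 — 3 statements merged into one kernel-verified Lean document; each statement's English description precedes it below -/
import Mathlib

section
/- Let G be a finite simple graph and f a product set-labeling of G such that every vertex label f(v) is a geometric progression with some integer common ratio r_v ≥ 2 and |f(v)| ≥ 2. Then f is a geometric product set-labeling of G (i.e., every edge label f(u)∗f(v) is also a geometric progression) if and only if for every edge uv of G, writing the endpoints so that r_u ≤ r_v, there exists a positive integer k with k ≤ |f(u)| and r_v = r_u^k. -/
/-!
Write the two labels as `a r^i` (`i < m`) and `b s^j` (`j < n`) with `r ≤ s`. Their product
has least element `a b` and second-least element `a b r`, so if it is a geometric progression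
its ratio is `r`; since `a b s` lies in it, `s = r^k`. The product is then the set of `a b r^(i + k j)`, and the
exponents `i + k j` fill an initial segment of `ℕ` exactly when the blocks `[k j, k j + m)` leave no
gaps, that is when `k ≤ m`.
-/

open Pointwise

def IsGeomProg (A : Finset ℕ) : Prop :=
  ∃ a r : ℕ, 0 < a ∧ 2 ≤ r ∧ A = (Finset.range A.card).image (fun i => a * r ^ i)

open Finset

def geomProg (a r n : ℕ) : Finset ℕ := (range n).image fun i => a * r ^ i

def prodExponents (m n k : ℕ) : Finset ℕ := (range m ×ˢ range n).image fun p => p.1 + k * p.2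

section

variable {a b r s m n k N x : ℕ}

lemma mul_pow_injective (ha : 0 < a) (hr : 2 ≤ r) : Function.Injective fun i => a * r ^ i :=
  fun _ _ h => Nat.pow_right_injective hr (Nat.eq_of_mul_eq_mul_left ha h)

lemma mem_geomProg : x ∈ geomProg a r n ↔ ∃ i < n, a * r ^ i = x := by
  simp [geomProg]

lemma card_geomProg (ha : 0 < a) (hr : 2 ≤ r) : (geomProg a r n).card = n := by
  rw [geomProg, card_image_of_injective _ (mul_pow_injective ha hr), card_range]

lemma le_of_mem_geomProg (hr : 0 < r) (hx : x ∈ geomProg a r n) : a ≤ x := by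
  obtain ⟨i, -, rfl⟩ := mem_geomProg.1 hx
  exact Nat.le_mul_of_pos_right a (pow_pos hr i)

lemma mul_le_of_mem_geomProg (hx : x ∈ geomProg a r n) (hax : a < x) : a * r ≤ x := by
  obtain ⟨i, -, rfl⟩ := mem_geomProg.1 hx
  obtain _ | i := i
  · simp at hax
  · exact Nat.mul_le_mul_left a (Nat.le_self_pow i.succ_ne_zero r)

lemma eq_of_geomProg_of_isLeast (ha : 0 < a) (hr : 2 ≤ r) {c t : ℕ} (ht : 2 ≤ t)
    (hc : c ∈ geomProg a r n) (hct : c * t ∈ geomProg a r n)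
    (hmin : ∀ x ∈ geomProg a r n, c ≤ x) (hnext : ∀ x ∈ geomProg a r n, c < x → c * t ≤ x) :
    a = c ∧ r = t := by
  obtain ⟨i, hi, -⟩ := mem_geomProg.1 hc
  have hac : a = c := le_antisymm (le_of_mem_geomProg (by omega) hc)
    (hmin a (mem_geomProg.2 ⟨0, by omega, by simp⟩))
  subst hac
  obtain ⟨j, hj, hctj⟩ := mem_geomProg.1 hct
  obtain _ | j := j
  · nlinarith
  have hrt : a * t ≤ a * r :=
    hnext _ (mem_geomProg.2 ⟨1, by omega, by simp⟩) (by nlinarith)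
  have htr : a * r ≤ a * t := mul_le_of_mem_geomProg hct (by nlinarith)
  exact ⟨rfl, Nat.eq_of_mul_eq_mul_left ha (le_antisymm htr hrt)⟩

lemma mem_geomProg_mul_geomProg :
    x ∈ geomProg a r m * geomProg b s n ↔ ∃ i < m, ∃ j < n, a * b * (r ^ i * s ^ j) = x := by
  simp only [mem_mul, mem_geomProg]
  constructor
  · rintro ⟨_, ⟨i, hi, rfl⟩, _, ⟨j, hj, rfl⟩, rfl⟩
    exact ⟨i, hi, j, hj, by ring⟩
  · rintro ⟨i, hi, j, hj, rfl⟩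
    exact ⟨_, ⟨i, hi, rfl⟩, _, ⟨j, hj, rfl⟩, by ring⟩

lemma le_of_mem_geomProg_mul (hr : 0 < r) (hs : 0 < s)
    (hx : x ∈ geomProg a r m * geomProg b s n) : a * b ≤ x := by
  obtain ⟨i, -, j, -, rfl⟩ := mem_geomProg_mul_geomProg.1 hx
  exact Nat.le_mul_of_pos_right _ (Nat.mul_pos (pow_pos hr i) (pow_pos hs j))

lemma mul_le_of_mem_geomProg_mul (hrs : r ≤ s) (hr : 0 < r)
    (hx : x ∈ geomProg a r m * geomProg b s n) (hlt : a * b < x) : a * b * r ≤ x := by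
  obtain ⟨i, -, j, -, rfl⟩ := mem_geomProg_mul_geomProg.1 hx
  refine Nat.mul_le_mul_left _ ?_
  obtain _ | i := i
  · obtain _ | j := j
    · simp at hlt
    · simpa using hrs.trans (Nat.le_self_pow j.succ_ne_zero s)
  · exact (Nat.le_self_pow i.succ_ne_zero r).trans
      (Nat.le_mul_of_pos_right _ (pow_pos (hr.trans_le hrs) j))

lemma geomProg_mul_geomProg_pow :
    geomProg a r m * geomProg b (r ^ k) n = (prodExponents m n k).image fun e => a * b * r ^ e := by
  ext x
  simp only [mem_geomProg_mul_geomProg, prodExponents, mem_image, mem_product, mem_range,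
    Prod.exists, ← pow_mul, ← pow_add]
  constructor
  · rintro ⟨i, hi, j, hj, rfl⟩
    exact ⟨_, ⟨i, j, ⟨hi, hj⟩, rfl⟩, rfl⟩
  · rintro ⟨_, ⟨i, j, ⟨hi, hj⟩, rfl⟩, rfl⟩
    exact ⟨i, hi, j, hj, rfl⟩

lemma prodExponents_eq_range (hk : 0 < k) (hkm : k ≤ m) (hn : 0 < n) :
    prodExponents m n k = range (m + k * (n - 1)) := by
  ext e
  simp only [prodExponents, mem_image, mem_product, mem_range, Prod.exists]
  constructor
  · rintro ⟨i, j, ⟨hi, hj⟩, rfl⟩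
    have : k * j ≤ k * (n - 1) := Nat.mul_le_mul_left k (by omega)
    omega
  · intro he
    -- Below the last block write `e = e % k + k (e / k)`; in the last block take `j = n - 1`.
    have hdiv := Nat.div_add_mod e k
    have hmod := Nat.mod_lt e hk
    by_cases hq : e / k ≤ n - 1
    · exact ⟨e % k, e / k, ⟨by omega, by omega⟩, by omega⟩
    · have : k * (n - 1) ≤ k * (e / k) := Nat.mul_le_mul_left k (by omega)
      exact ⟨e - k * (n - 1), n - 1, ⟨by omega, by omega⟩, by omega⟩

lemma le_of_prodExponents_eq_range (hm : 0 < m) (hn : 2 ≤ n)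
    (h : prodExponents m n k = range N) : k ≤ m := by
  have mem_iff : ∀ e, (∃ i < m, ∃ j < n, i + k * j = e) ↔ e < N := fun e => by
    rw [← mem_range, ← h]
    simp [prodExponents, and_assoc]
  by_contra! hkm
  have htop : m - 1 + k * (n - 1) < N := (mem_iff _).1 ⟨m - 1, by omega, n - 1, by omega, rfl⟩
  have : k ≤ k * (n - 1) := Nat.le_mul_of_pos_right k (by omega)
  obtain ⟨i, hi, j, -, hij⟩ := (mem_iff m).2 (by omega)
  obtain _ | j := j
  · omega
  · nlinarith

lemma isGeomProg_geomProg_mul_geomProg_pow (ha : 0 < a) (hb : 0 < b) (hr : 2 ≤ r)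
    (hk : 0 < k) (hkm : k ≤ m) (hn : 0 < n) :
    IsGeomProg (geomProg a r m * geomProg b (r ^ k) n) := by
  have hab := Nat.mul_pos ha hb
  refine ⟨a * b, r, hab, hr, ?_⟩
  rw [geomProg_mul_geomProg_pow, prodExponents_eq_range hk hkm hn, ← geomProg,
    card_geomProg hab hr]
  rfl

lemma exists_pow_eq_of_isGeomProg_geomProg_mul (ha : 0 < a) (hb : 0 < b) (hr : 2 ≤ r)
    (hrs : r ≤ s) (hm : 2 ≤ m) (hn : 2 ≤ n) (H : IsGeomProg (geomProg a r m * geomProg b s n)) :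
    ∃ k, 0 < k ∧ k ≤ m ∧ s = r ^ k := by
  obtain ⟨A, R, hA, hR, hP⟩ := H
  change _ = geomProg A R _ at hP
  generalize (geomProg a r m * geomProg b s n).card = N at hP
  have hab := Nat.mul_pos ha hb
  have mem_P (i j : ℕ) (hi : i < m) (hj : j < n) :
      a * b * (r ^ i * s ^ j) ∈ geomProg A R N :=
    hP ▸ mem_geomProg_mul_geomProg.2 ⟨i, hi, j, hj, rfl⟩
  obtain ⟨rfl, hRr⟩ : A = a * b ∧ R = r :=
    eq_of_geomProg_of_isLeast hA hR hr (by simpa using mem_P 0 0 (by omega) (by omega))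
      (by simpa using mem_P 1 0 hm (by omega))
      (fun x hx => le_of_mem_geomProg_mul (by omega) (by omega) (hP ▸ hx))
      (fun x hx => mul_le_of_mem_geomProg_mul hrs (by omega) (hP ▸ hx))
  subst R
  obtain ⟨k, -, hsk⟩ := mem_geomProg.1 (by simpa using mem_P 0 1 (by omega) hn)
  obtain rfl : s = r ^ k := (Nat.eq_of_mul_eq_mul_left hab hsk).symm
  have hk : 0 < k := Nat.pos_of_ne_zero fun h => by simp [h] at hrs; omega
  have hexp : prodExponents m n k = range N := by
    apply image_injective (mul_pow_injective hab hr)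
    rw [← geomProg_mul_geomProg_pow]
    exact hP
  exact ⟨k, hk, le_of_prodExponents_eq_range (by omega) hn hexp, rfl⟩

lemma isGeomProg_geomProg_mul_iff (ha : 0 < a) (hb : 0 < b) (hr : 2 ≤ r) (hrs : r ≤ s)
    (hm : 2 ≤ m) (hn : 2 ≤ n) :
    IsGeomProg (geomProg a r m * geomProg b s n) ↔ ∃ k, 0 < k ∧ k ≤ m ∧ s = r ^ k := by
  refine ⟨exists_pow_eq_of_isGeomProg_geomProg_mul ha hb hr hrs hm hn, ?_⟩
  rintro ⟨k, hk, hkm, rfl⟩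
  exact isGeomProg_geomProg_mul_geomProg_pow ha hb hr hk hkm (by omega)

end

theorem geometric_productSetLabeling_iff_general {V : Type*}
    (G : SimpleGraph V) (f : V → Finset ℕ) (rv : V → ℕ) (av : V → ℕ)
    (hr : ∀ v, 2 ≤ rv v) (ha : ∀ v, 0 < av v) (hcard : ∀ v, 2 ≤ (f v).card)
    (hgp : ∀ v, f v = (Finset.range (f v).card).image (fun i => av v * (rv v) ^ i)) :
    (∀ u v, G.Adj u v → IsGeomProg (f u * f v)) ↔
      (∀ u v, G.Adj u v → rv u ≤ rv v →
        ∃ k : ℕ, 0 < k ∧ k ≤ (f u).card ∧ rv v = (rv u) ^ k) := by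
  have key : ∀ u v, rv u ≤ rv v →
      (IsGeomProg (f u * f v) ↔ ∃ k, 0 < k ∧ k ≤ (f u).card ∧ rv v = rv u ^ k) := by
    intro u v huv
    have := isGeomProg_geomProg_mul_iff (ha u) (ha v) (hr u) huv (hcard u) (hcard v)
    rwa [geomProg, geomProg, ← hgp u, ← hgp v] at this
  refine ⟨fun h u v huv hle => (key u v hle).1 (h u v huv), fun h u v huv => ?_⟩
  rcases le_total (rv u) (rv v) with hle | hle
  · exact (key u v hle).2 (h u v huv hle)
  · rw [mul_comm]
    exact (key v u hle).2 (h v u huv.symm hle)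

/-- Let `f` be a product set-labeling (injective, nonempty labels of
positive integers) of a finite simple graph `G` such that every vertex label `f v` is a
geometric progression with integer common ratio `rv v ≥ 2` and `|f v| ≥ 2`. Then `f` is
geometric (every edge label is a geometric progression) iff for every edge `uv`, written
so that `rv u ≤ rv v`, there is a positive integer `k ≤ |f u|` with `rv v = (rv u)^k`. -/
theorem geometric_productSetLabeling_iff {V : Type*} [Fintype V]
    (G : SimpleGraph V) (f : V → Finset ℕ) (rv : V → ℕ) (av : V → ℕ)
    (hinj : Function.Injective f)
    (hr : ∀ v, 2 ≤ rv v) (ha : ∀ v, 0 < av v) (hcard : ∀ v, 2 ≤ (f v).card)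
    (hgp : ∀ v, f v = (Finset.range (f v).card).image (fun i => av v * (rv v) ^ i)) :
    (∀ u v, G.Adj u v → IsGeomProg (f u * f v)) ↔
      (∀ u v, G.Adj u v → rv u ≤ rv v →
        ∃ k : ℕ, 0 < k ∧ k ≤ (f u).card ∧ rv v = (rv u) ^ k) :=
  geometric_productSetLabeling_iff_general G f rv av hr ha hcard hgp
end

section
/- Let G be a finite connected bipartite simple graph with bipartition (X, Y) and at least one edge, and let f be a like-geometric product set-labeling of G with common characteristic index k such that for every edge uv with u ∈ X and v ∈ Y one has r_v = r_u^k (i.e., X is the side of smaller common ratios). Then f is a uniform product set-labeling (all edge labels have the same cardinality) if and only if the cardinality of the vertex labels is constant on X and constant on Y. -/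
/-
For `u ∈ X` adjacent to `v`, write `f u = {a rⁱ : i < m}`; then `f v = {b r^(kj) : j < n}` and
`f u * f v = {ab r^(i + kj)}`. This set contains its least element `ab` and also `abr`, so a
geometric progression equal to it must have ratio `r`; hence the exponents `i + kj` fill an
interval, whose top is `(m - 1) + k(n - 1)`, and the edge label has `m + k(n - 1)` elements.
Uniformity therefore says that `|f u| + k(|f v| - 1)` is the same number `c` on every edge. In a
connected bipartite graph this holds iff `|f|` is constant on each side: the function equal to
`|f|` on `X` and to `c - k(|f| - 1)` off `X` agrees at the two ends of every edge.
-/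

open Pointwise

open Finset

theorem mul_pow_injective_s13 {c r : ℕ} (hc : 0 < c) (hr : 2 ≤ r) :
    Function.Injective (c * r ^ ·) :=
  fun _ _ h => Nat.pow_right_injective hr (Nat.eq_of_mul_eq_mul_left hc h)

theorem image_mul_pow_mul_image_mul_pow (a b r k m n : ℕ) :
    (range m).image (a * r ^ ·) * (range n).image (b * (r ^ k) ^ ·) =
      (range m + (range n).image (k * ·)).image (a * b * r ^ ·) := by
  ext x
  simp only [mem_mul, mem_add, mem_image, mem_range]
  constructor
  · rintro ⟨_, ⟨i, hi, rfl⟩, _, ⟨j, hj, rfl⟩, rfl⟩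
    exact ⟨i + k * j, ⟨i, hi, k * j, ⟨j, hj, rfl⟩, rfl⟩, by ring⟩
  · rintro ⟨_, ⟨i, hi, _, ⟨j, hj, rfl⟩, rfl⟩, rfl⟩
    exact ⟨_, ⟨i, hi, rfl⟩, _, ⟨j, hj, rfl⟩, by ring⟩

theorem eq_range_card_of_isGeomProg_image {c r : ℕ} {E : Finset ℕ} (hc : 0 < c) (hr : 2 ≤ r)
    (h0 : 0 ∈ E) (h1 : 1 ∈ E) (h : IsGeomProg (E.image (c * r ^ ·))) : E = range #E := by
  have hinj := mul_pow_injective_s13 hc hr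
  obtain ⟨A, s, -, hs, hS⟩ := h
  rw [card_image_of_injective _ hinj] at hS
  have hmem : ∀ t ∈ E, ∃ i < #E, c * r ^ t = A * s ^ i := fun t ht => by
    obtain ⟨i, hi, hi'⟩ := mem_image.1 (hS ▸ mem_image_of_mem _ ht)
    exact ⟨i, mem_range.1 hi, hi'.symm⟩
  have hmem' : ∀ i < #E, ∃ t ∈ E, c * r ^ t = A * s ^ i := fun i hi =>
    mem_image.1 (hS ▸ mem_image_of_mem _ (mem_range.2 hi))
  have hcard : 2 ≤ #E := one_lt_card.2 ⟨0, h0, 1, h1, zero_ne_one⟩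
  have hAc : A = c := by
    obtain ⟨i, -, hi⟩ := hmem 0 h0
    obtain ⟨t, -, ht⟩ := hmem' 0 (by omega)
    apply le_antisymm
    · calc A ≤ A * s ^ i := Nat.le_mul_of_pos_right _ (by positivity)
        _ = c := by simpa using hi.symm
    · calc c ≤ c * r ^ t := Nat.le_mul_of_pos_right _ (by positivity)
        _ = A := by simpa using ht
  subst hAc
  have hsr : s = r := by
    obtain ⟨e, -, he⟩ := hmem' 1 hcard
    obtain ⟨i, -, hi⟩ := hmem 1 h1
    have hse : s = r ^ e := by simpa using (Nat.eq_of_mul_eq_mul_left hc he).symm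
    have : r ^ 1 = r ^ (e * i) := by
      rw [pow_mul, ← hse]; exact Nat.eq_of_mul_eq_mul_left hc hi
    rw [hse, Nat.eq_one_of_mul_eq_one_right (Nat.pow_right_injective hr this).symm, pow_one]
  subst hsr
  exact image_injective hinj hS

theorem card_image_mul_pow_mul_image_mul_pow {a b r k m n : ℕ} (ha : 0 < a) (hb : 0 < b)
    (hr : 2 ≤ r) (hm : 2 ≤ m) (hn : 1 ≤ n)
    (h : IsGeomProg ((range m).image (a * r ^ ·) * (range n).image (b * (r ^ k) ^ ·))) :
    #((range m).image (a * r ^ ·) * (range n).image (b * (r ^ k) ^ ·)) = m + k * (n - 1) := by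
  rw [image_mul_pow_mul_image_mul_pow] at h ⊢
  set E := range m + (range n).image (k * ·)
  have hmemE : ∀ i < m, ∀ j < n, i + k * j ∈ E := fun i hi j hj =>
    add_mem_add (mem_range.2 hi) (mem_image_of_mem _ (mem_range.2 hj))
  obtain ⟨N, hN⟩ : ∃ N, E = range N := ⟨_, eq_range_card_of_isGeomProg_image
    (Nat.mul_pos ha hb) hr (hmemE 0 (by omega) 0 hn) (hmemE 1 hm 0 hn) h⟩
  rw [card_image_of_injective _ (mul_pow_injective_s13 (Nat.mul_pos ha hb) hr), hN, card_range]
  have htop : (m - 1) + k * (n - 1) < N :=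
    mem_range.1 (hN ▸ hmemE (m - 1) (by omega) (n - 1) (by omega))
  obtain ⟨i, hi, _, hkj, hij⟩ := mem_add.1 (hN ▸ mem_range.2 (by omega) : N - 1 ∈ E)
  obtain ⟨j, hj, rfl⟩ := mem_image.1 hkj
  have : k * j ≤ k * (n - 1) := Nat.mul_le_mul_left _ (by rw [mem_range] at hj; omega)
  rw [mem_range] at hi
  omega

theorem SimpleGraph.Preconnected.eq_of_forall_adj_eq {V α : Type*} {G : SimpleGraph V}
    (hG : G.Preconnected) {φ : V → α} (hφ : ∀ u v, G.Adj u v → φ u = φ v) (u v : V) :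
    φ u = φ v := by
  obtain ⟨p⟩ := hG u v
  induction p with
  | nil => rfl
  | cons huw _ ih => exact (hφ _ _ huw).trans ih

theorem SimpleGraph.Preconnected.exists_forall_adj_add_eq_iff {V : Type*} {G : SimpleGraph V}
    (hG : G.Preconnected) {X : Set V} (hX : ∀ u v, G.Adj u v → (u ∈ X ↔ v ∉ X))
    (p q : V → ℕ) :
    (∃ c, ∀ u v, G.Adj u v → u ∈ X → p u + q v = c) ↔
      (∀ u ∈ X, ∀ u' ∈ X, p u = p u') ∧ (∀ v ∉ X, ∀ v' ∉ X, q v = q v') := by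
  constructor
  · classical
    rintro ⟨c, hc⟩
    let ψ : V → ℤ := fun w => if w ∈ X then p w else c - q w
    have hψ : ∀ u v, G.Adj u v → ψ u = ψ v := by
      intro u v huv
      by_cases hu : u ∈ X
      · have hv := (hX u v huv).1 hu
        simp only [ψ, if_pos hu, if_neg hv]
        have := hc u v huv hu
        omega
      · have hv : v ∈ X := by simpa [hu] using hX u v huv
        simp only [ψ, if_pos hv, if_neg hu]
        have := hc v u huv.symm hv
        omega
    refine ⟨fun u hu u' hu' => ?_, fun v hv v' hv' => ?_⟩
    · simpa [ψ, hu, hu'] using hG.eq_of_forall_adj_eq hψ u u'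
    · simpa [ψ, hv, hv'] using hG.eq_of_forall_adj_eq hψ v v'
  · rintro ⟨hp, hq⟩
    by_cases h : ∃ u v, G.Adj u v ∧ u ∈ X
    · obtain ⟨u₀, v₀, h₀, hu₀⟩ := h
      refine ⟨p u₀ + q v₀, fun u v huv hu => ?_⟩
      rw [hp u hu u₀ hu₀, hq v ((hX u v huv).1 hu) v₀ ((hX u₀ v₀ h₀).1 hu₀)]
    · push Not at h
      exact ⟨0, fun u v huv hu => absurd hu (h u v huv)⟩

theorem likeGeometric_uniform_iff_general {V : Type*}
    (G : SimpleGraph V) (hconn : G.Connected)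
    (X : Set V) (hbip : ∀ u v, G.Adj u v → (u ∈ X ↔ v ∉ X))
    (f : V → Finset ℕ) (rv av : V → ℕ) (k : ℕ)
    (hr : ∀ v, 2 ≤ rv v) (ha : ∀ v, 0 < av v) (hcard : ∀ v, 2 ≤ (f v).card)
    (hgp : ∀ v, f v = (Finset.range (f v).card).image (fun i => av v * (rv v) ^ i))
    (hgeom : ∀ u v, G.Adj u v → IsGeomProg (f u * f v))
    (hk : 1 < k)
    (hchar : ∀ u v, G.Adj u v → u ∈ X → rv v = (rv u) ^ k) :
    (∃ c : ℕ, ∀ u v, G.Adj u v → (f u * f v).card = c) ↔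
      ((∀ u ∈ X, ∀ u' ∈ X, (f u).card = (f u').card) ∧
        (∀ v ∉ X, ∀ v' ∉ X, (f v).card = (f v').card)) := by
  have card_edge : ∀ u v, G.Adj u v → u ∈ X → #(f u * f v) = #(f u) + k * (#(f v) - 1) := by
    intro u v huv hu
    have hgeom' := hgeom u v huv
    rw [hgp u, hgp v, hchar u v huv hu] at hgeom'
    have h := card_image_mul_pow_mul_image_mul_pow (ha u) (ha v) (hr u) (hcard u)
      (one_le_two.trans (hcard v)) hgeom'
    rwa [← hchar u v huv hu, ← hgp u, ← hgp v] at h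
  have huniform : (∃ c, ∀ u v, G.Adj u v → #(f u * f v) = c) ↔
      ∃ c, ∀ u v, G.Adj u v → u ∈ X → #(f u) + k * (#(f v) - 1) = c := by
    refine exists_congr fun c => ⟨fun h u v huv hu => card_edge u v huv hu ▸ h u v huv, ?_⟩
    intro h u v huv
    by_cases hu : u ∈ X
    · exact card_edge u v huv hu ▸ h u v huv hu
    · have hv : v ∈ X := by simpa [hu] using hbip u v huv
      rw [mul_comm, card_edge v u huv.symm hv, h v u huv.symm hv]
  rw [huniform, hconn.preconnected.exists_forall_adj_add_eq_iff hbip]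
  refine and_congr Iff.rfl (forall₂_congr fun v _ => forall₂_congr fun v' _ => ?_)
  rw [Nat.mul_left_cancel_iff (by omega : 0 < k)]
  have := hcard v; have := hcard v'
  omega

/-- Let `G` be a finite connected bipartite simple graph with
bipartition `(X, Xᶜ)` and at least one edge, and let `f` be a like-geometric product
set-labeling of `G` with common characteristic index `k` such that for every edge `uv`
with `u ∈ X` one has `rv v = (rv u)^k` (so `X` is the side of smaller common ratios).
Then `f` is uniform (all edge labels have the same cardinality) iff the cardinality of
the vertex labels is constant on `X` and constant on `Xᶜ`. -/
theorem likeGeometric_uniform_iff {V : Type*} [Fintype V]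
    (G : SimpleGraph V) (hconn : G.Connected) (hedge : ∃ u v, G.Adj u v)
    (X : Set V) (hbip : ∀ u v, G.Adj u v → (u ∈ X ↔ v ∉ X))
    (f : V → Finset ℕ) (rv av : V → ℕ) (k : ℕ)
    (hinj : Function.Injective f)
    (hr : ∀ v, 2 ≤ rv v) (ha : ∀ v, 0 < av v) (hcard : ∀ v, 2 ≤ (f v).card)
    (hgp : ∀ v, f v = (Finset.range (f v).card).image (fun i => av v * (rv v) ^ i))
    (hgeom : ∀ u v, G.Adj u v → IsGeomProg (f u * f v))
    (hk : 1 < k)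
    (hchar : ∀ u v, G.Adj u v → u ∈ X → rv v = (rv u) ^ k) :
    (∃ c : ℕ, ∀ u v, G.Adj u v → (f u * f v).card = c) ↔
      ((∀ u ∈ X, ∀ u' ∈ X, (f u).card = (f u').card) ∧
        (∀ v ∉ X, ∀ v' ∉ X, (f v).card = (f v').card)) :=
  likeGeometric_uniform_iff_general G hconn X hbip f rv av k hr ha hcard hgp hgeom hk hchar
end

section
/- Let a, b, r, s, m, n be positive integers with r ≥ 2, s ≥ 2, r < s, m ≥ 2, n ≥ 2, and suppose s is not equal to r^k for any positive integer k. Set A = {a·r^i : 0 ≤ i < m} and B = {b·s^j : 0 ≤ j < n}. Then the product set A∗B is not a geometric progression. -/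
/-!
If `A ∗ B` were a geometric progression with first term `c` and ratio `t`, then `c` would be
its least element `ab`. Since `abr` and `abs` lie in `A ∗ B`, both `r` and `s` are powers of `t`;
since `abt` lies in `A ∗ B`, `t = r^i s^j ≥ r`. Hence `t = r`, and `s` is a power of `r`.
-/

open Pointwise

open Finset

def geomSeq (a r m : ℕ) : Finset ℕ := (range m).image fun i => a * r ^ i

section geomSeq

variable {a b c r s t m n N x y : ℕ}

theorem mem_geomSeq : x ∈ geomSeq a r m ↔ ∃ i < m, a * r ^ i = x := by
  simp [geomSeq]

theorem mem_geomSeq_mul_geomSeq :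
    x ∈ geomSeq a r m * geomSeq b s n ↔ ∃ i < m, ∃ j < n, a * b * (r ^ i * s ^ j) = x := by
  simp only [mem_mul, mem_geomSeq]
  constructor
  · rintro ⟨_, ⟨i, hi, rfl⟩, _, ⟨j, hj, rfl⟩, rfl⟩
    exact ⟨i, hi, j, hj, by ring⟩
  · rintro ⟨i, hi, j, hj, rfl⟩
    exact ⟨_, ⟨i, hi, rfl⟩, _, ⟨j, hj, rfl⟩, by ring⟩

theorem isLeast_geomSeq_mul_geomSeq (hr : 0 < r) (hs : 0 < s) (hm : 0 < m) (hn : 0 < n) :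
    IsLeast (↑(geomSeq a r m * geomSeq b s n) : Set ℕ) (a * b) := by
  refine ⟨mem_geomSeq_mul_geomSeq.2 ⟨0, hm, 0, hn, by simp⟩, ?_⟩
  rintro _ hx
  obtain ⟨i, -, j, -, rfl⟩ := mem_geomSeq_mul_geomSeq.1 (mem_coe.1 hx)
  exact Nat.le_mul_of_pos_right _ (by positivity)

theorem eq_of_isLeast_geomSeq (ht : 0 < t) (h : IsLeast (geomSeq c t N : Set ℕ) y) : c = y := by
  obtain ⟨i, hi, rfl⟩ := mem_geomSeq.1 h.1
  have hc : c ∈ geomSeq c t N := mem_geomSeq.2 ⟨0, by omega, by simp⟩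
  exact le_antisymm (Nat.le_mul_of_pos_right _ (by positivity)) (h.2 hc)

theorem exists_ne_zero_eq_pow_of_mul_mem_geomSeq (hc : 0 < c) (hx : x ≠ 1)
    (h : c * x ∈ geomSeq c t N) : ∃ k ≠ 0, x = t ^ k := by
  obtain ⟨k, -, hk⟩ := mem_geomSeq.1 h
  obtain rfl := Nat.eq_of_mul_eq_mul_left hc hk
  exact ⟨k, by rintro rfl; exact hx (pow_zero t), rfl⟩

end geomSeq

theorem le_pow_mul_pow_of_one_lt {r s i j : ℕ} (hrs : r ≤ s) (h : 1 < r ^ i * s ^ j) :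
    r ≤ r ^ i * s ^ j := by
  rcases Nat.eq_zero_or_pos i with rfl | hi
  · rw [pow_zero, one_mul] at h ⊢
    have hj : j ≠ 0 := by rintro rfl; simp at h
    exact hrs.trans (Nat.le_self_pow hj s)
  · have hsj : 0 < s ^ j := Nat.pos_of_mul_pos_left (by omega : 0 < r ^ i * s ^ j)
    exact (Nat.le_self_pow hi.ne' r).trans (Nat.le_mul_of_pos_right _ hsj)

theorem productSet_not_geomProg_of_not_power_general (a b r s m n : ℕ)
    (ha : 0 < a) (hb : 0 < b) (hr : 2 ≤ r) (hrs : r < s)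
    (hm : 2 ≤ m) (hn : 2 ≤ n)
    (hnp : ∀ k : ℕ, 0 < k → s ≠ r ^ k) :
    ¬ IsGeomProg (((Finset.range m).image (fun i => a * r ^ i)) *
        ((Finset.range n).image (fun j => b * s ^ j))) := by
  change ¬ IsGeomProg (geomSeq a r m * geomSeq b s n)
  set C := geomSeq a r m * geomSeq b s n
  rintro ⟨c, t, -, ht, hC⟩
  change C = geomSeq c t C.card at hC
  have hab : 0 < a * b := Nat.mul_pos ha hb
  have mem (i j : ℕ) (hi : i < m) (hj : j < n) : a * b * (r ^ i * s ^ j) ∈ C :=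
    mem_geomSeq_mul_geomSeq.2 ⟨i, hi, j, hj, rfl⟩
  have habr : a * b * r ∈ C := by simpa using mem 1 0 (by omega) (by omega)
  have habs : a * b * s ∈ C := by simpa using mem 0 1 (by omega) (by omega)
  have hcard : 1 < C.card := by
    refine one_lt_card.2 ⟨_, habr, _, mem 0 0 (by omega) (by omega), ?_⟩
    simpa using (lt_mul_of_one_lt_right hab (by omega : 1 < r)).ne'
  have hleast : IsLeast (C : Set ℕ) (a * b) :=
    isLeast_geomSeq_mul_geomSeq (by omega) (by omega) (by omega) (by omega)
  rw [hC] at hleast habr habs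
  obtain rfl : c = a * b := eq_of_isLeast_geomSeq (by omega) hleast
  obtain ⟨k, hk0, hk⟩ := exists_ne_zero_eq_pow_of_mul_mem_geomSeq hab (by omega) habr
  obtain ⟨l, hl0, hl⟩ := exists_ne_zero_eq_pow_of_mul_mem_geomSeq hab (by omega) habs
  have habt : a * b * t ∈ C := by
    rw [hC]
    exact mem_geomSeq.2 ⟨1, hcard, by rw [pow_one]⟩
  obtain ⟨i, -, j, -, hij⟩ := mem_geomSeq_mul_geomSeq.1 habt
  have hrt : r ≤ t := by
    rw [← Nat.eq_of_mul_eq_mul_left hab hij] at ht ⊢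
    exact le_pow_mul_pow_of_one_lt hrs.le ht
  obtain rfl : t = r := le_antisymm (hk ▸ Nat.le_self_pow hk0 t) hrt
  exact hnp l (Nat.pos_of_ne_zero hl0) hl

/-- For positive integers `a, b, r, s, m, n` with `r, s ≥ 2`, `r < s`,
`m, n ≥ 2`, if `s` is not a positive integral power of `r`, then for
`A = {a·r^i : 0 ≤ i < m}` and `B = {b·s^j : 0 ≤ j < n}` the product set `A ∗ B` is not a
geometric progression. -/
theorem productSet_not_geomProg_of_not_power (a b r s m n : ℕ)
    (ha : 0 < a) (hb : 0 < b) (hr : 2 ≤ r) (hs : 2 ≤ s) (hrs : r < s)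
    (hm : 2 ≤ m) (hn : 2 ≤ n)
    (hnp : ∀ k : ℕ, 0 < k → s ≠ r ^ k) :
    ¬ IsGeomProg (((Finset.range m).image (fun i => a * r ^ i)) *
        ((Finset.range n).image (fun j => b * s ^ j))) :=
  productSet_not_geomProg_of_not_power_general a b r s m n ha hb hr hrs hm hn hnp
end
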